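/- arXiv:1903.11571 — 2 statements merged into one kernel-verified Lean document; each statement's English description precedes it below -/
import Mathlib

section
/- Let f ∈ C^{1,1}([0,T]×D([0,T],ℝ)) with ∂_t f, ∂_ω f ∈ C(Λ). Then for every (t,ω) ∈ [0,T]×D([0,T],ℝ) the modified vertical derivative D_ω f(t,ω) exists and ∂_ω f(t,ω) = D_ω f(t,ω). -/
open Filter Set MeasureTheory Topology

noncomputable section

/-- The path `ω` stopped at time `t`: `s ↦ ω (s ⊓ t)`. -/
def stopped (ω : ℝ → ℝ) (t : ℝ) : ℝ → ℝ := fun s => ω (min s t)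

/-- `ω : ℝ → ℝ` represents a càdlàg path on `[0,T]`: it is right-continuous at every
`t ∈ [0,T)` and has left limits at every `t ∈ (0,T]`. -/
def Cadlag (T : ℝ) (ω : ℝ → ℝ) : Prop :=
  (∀ t ∈ Set.Ico (0:ℝ) T, ContinuousWithinAt ω (Set.Ici t) t) ∧
  (∀ t ∈ Set.Ioc (0:ℝ) T, ∃ l : ℝ, Filter.Tendsto ω (nhdsWithin t (Set.Iio t)) (nhds l))

/-- Dupire's pseudometric `d_∞((t,ω),(t',ω')) = |t−t'| + sup_{s∈[0,T]} |ω(t∧s) − ω'(t'∧s)|`. -/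
def dInf (T : ℝ) (p q : ℝ × (ℝ → ℝ)) : ℝ :=
  |p.1 - q.1| + ⨆ s : Set.Icc (0:ℝ) T, |p.2 (min p.1 ↑s) - q.2 (min q.1 ↑s)|

/-- `f ∈ C(Λ)`: continuity with respect to `d_∞` at every point of `Λ = [0,T] × D([0,T],ℝ)`. -/
def ContOnLambda (T : ℝ) (f : ℝ → (ℝ → ℝ) → ℝ) : Prop :=
  ∀ t ∈ Set.Icc (0:ℝ) T, ∀ ω : ℝ → ℝ, Cadlag T ω →
    ∀ ε > 0, ∃ δ > 0, ∀ t' ∈ Set.Icc (0:ℝ) T, ∀ ω' : ℝ → ℝ, Cadlag T ω' →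
      dInf T (t, ω) (t', ω') < δ → |f t' ω' - f t ω| < ε

/-- The left limit `g(t−)` with the convention `g(0−) := g(0)`. -/
def leftVal (g : ℝ → ℝ) (t : ℝ) : ℝ := if 0 < t then Function.leftLim g t else g 0

/-- The jump `Δω_t = ω_t − ω_{t−}` (with `ω_{0−} := ω_0`). -/
def jumpAt (ω : ℝ → ℝ) (t : ℝ) : ℝ := ω t - leftVal ω t

/-- `ω ∈ 𝒱`: a càdlàg path of finite (bounded) variation on `[0,T]`. -/
def FV (T : ℝ) (ω : ℝ → ℝ) : Prop := Cadlag T ω ∧ BoundedVariationOn ω (Set.Icc 0 T)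

/-- `I` is the Lebesgue–Stieltjes integral `∫₀ᵗ g dω`: for some (any) decomposition
`ω = F₁ − F₂` on `[0,T]` into nondecreasing right-continuous functions,
`I = ∫_{(0,t]} g dμ₁ − ∫_{(0,t]} g dμ₂`. -/
def IsLSIntegral (T : ℝ) (g ω : ℝ → ℝ) (t I : ℝ) : Prop :=
  ∃ F₁ F₂ : StieltjesFunction ℝ,
    (∀ s ∈ Set.Icc (0:ℝ) T, ω s = F₁ s - F₂ s) ∧
    MeasureTheory.IntegrableOn g (Set.Ioc 0 t) F₁.measure ∧
    MeasureTheory.IntegrableOn g (Set.Ioc 0 t) F₂.measure ∧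
    I = (∫ s in Set.Ioc (0:ℝ) t, g s ∂F₁.measure) - ∫ s in Set.Ioc (0:ℝ) t, g s ∂F₂.measure

/-- The jump term `f(s,ω) − f(s−,ω) − f¹(s−,ω)·Δω_s`. -/
def jumpTerm (f f1 : ℝ → (ℝ → ℝ) → ℝ) (ω : ℝ → ℝ) (s : ℝ) : ℝ :=
  f s ω - leftVal (fun u => f u ω) s - leftVal (fun u => f1 u ω) s * jumpAt ω s

/-- The change of variables formula of Definition 1 along the finite variation path `ω`:
`t ↦ f(t,ω)` has finite variation and
`f(t,ω) = f(0,ω) + ∫₀ᵗ f⁰(s,ω) ds + ∫₀ᵗ f¹(s−,ω) dω_s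
        + Σ_{s≤t} [f(s,ω) − f(s−,ω) − f¹(s−,ω)·Δω_s]`. -/
def ChitaFormula (T : ℝ) (f f0 f1 : ℝ → (ℝ → ℝ) → ℝ) (ω : ℝ → ℝ) : Prop :=
  BoundedVariationOn (fun t => f t ω) (Set.Icc 0 T) ∧
  ∀ t ∈ Set.Icc (0:ℝ) T,
    IntervalIntegrable (fun s => f0 s ω) MeasureTheory.volume 0 t ∧
    Summable (fun s : Set.Icc (0:ℝ) t => jumpTerm f f1 ω ↑s) ∧
    ∃ I : ℝ, IsLSIntegral T (fun s => leftVal (fun u => f1 u ω) s) ω t I ∧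
      f t ω = f 0 ω + (∫ s in (0:ℝ)..t, f0 s ω) + I +
        ∑' s : Set.Icc (0:ℝ) t, jumpTerm f f1 ω ↑s

/-- Definition 1 (Chitashvili differentiability): `f ∈ C(Λ)` is differentiable with
derivatives `f⁰, f¹ ∈ C(Λ)` if the change of variables formula holds along every
càdlàg path of finite variation. -/
def ChitaDiff (T : ℝ) (f f0 f1 : ℝ → (ℝ → ℝ) → ℝ) : Prop :=
  ContOnLambda T f ∧ ContOnLambda T f0 ∧ ContOnLambda T f1 ∧
  ∀ ω : ℝ → ℝ, FV T ω → ChitaFormula T f f0 f1 ω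

/-- Dupire's bumped path `ω + h·1_{[t,∞)}` (which agrees with `ω + h·1_{[t,T]}` on `[0,T]`). -/
def bump (ω : ℝ → ℝ) (t h : ℝ) : ℝ → ℝ := fun s => ω s + if t ≤ s then h else 0

/-- Dupire's horizontal (time) derivative:
`∂_t f(t,ω) = lim_{h→0+} (f(t+h,ω^t) − f(t,ω))/h`. -/
def HasHorizDerivAt (f : ℝ → (ℝ → ℝ) → ℝ) (t : ℝ) (ω : ℝ → ℝ) (d : ℝ) : Prop :=
  Filter.Tendsto (fun h => (f (t + h) (stopped ω t) - f t ω) / h)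
    (nhdsWithin 0 (Set.Ioi 0)) (nhds d)

/-- Dupire's vertical (space) derivative:
`∂_ω f(t,ω) = lim_{h→0} (f(t,ω + h·1_{[t,T]}) − f(t,ω))/h`. -/
def HasVertDerivAt (f : ℝ → (ℝ → ℝ) → ℝ) (t : ℝ) (ω : ℝ → ℝ) (d : ℝ) : Prop :=
  Filter.Tendsto (fun h => (f t (bump ω t h) - f t ω) / h)
    (nhdsWithin 0 {(0:ℝ)}ᶜ) (nhds d)

/-- `χ_{t,h}(s) = (s−t)·1_{(t,t+h]}(s) + h·1_{(t+h,∞)}(s)` (continuous path deformation). -/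
def chi (t h : ℝ) : ℝ → ℝ := fun s => if s ≤ t then 0 else if s ≤ t + h then s - t else h

/-- The modified vertical derivative
`D_ω f(t,ω) = lim_{h→0+} (f(t+h, ω^t + χ_{t,h}) − f(t+h, ω^t))/h`. -/
def HasDVertDerivAt (f : ℝ → (ℝ → ℝ) → ℝ) (t : ℝ) (ω : ℝ → ℝ) (d : ℝ) : Prop :=
  Filter.Tendsto
    (fun h => (f (t + h) (fun s => stopped ω t s + chi t h s) - f (t + h) (stopped ω t)) / h)
    (nhdsWithin 0 (Set.Ioi 0)) (nhds d)

/-- Continuity of `f` in `ω` (w.r.t. `d_∞`) at each fixed time. -/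
def ContAtFixedTimes (T : ℝ) (f : ℝ → (ℝ → ℝ) → ℝ) : Prop :=
  ∀ t ∈ Set.Icc (0:ℝ) T, ∀ ω : ℝ → ℝ, Cadlag T ω →
    ∀ ε > 0, ∃ δ > 0, ∀ ω' : ℝ → ℝ, Cadlag T ω' →
      dInf T (t, ω) (t, ω') < δ → |f t ω' - f t ω| < ε

/-- `f ∈ C^{1,1}([0,T]×D)` in the Dupire sense, with horizontal derivative `ft` and
vertical derivative `fw`: `f ∈ C(Λ)`, `∂_t f` exists (for `t < T`) and is continuous
at fixed times, and `∂_ω f` exists and belongs to `C(Λ)`. -/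
def C11 (T : ℝ) (f ft fw : ℝ → (ℝ → ℝ) → ℝ) : Prop :=
  ContOnLambda T f ∧
  (∀ t ∈ Set.Ico (0:ℝ) T, ∀ ω : ℝ → ℝ, Cadlag T ω → HasHorizDerivAt f t ω (ft t ω)) ∧
  ContAtFixedTimes T ft ∧
  (∀ t ∈ Set.Icc (0:ℝ) T, ∀ ω : ℝ → ℝ, Cadlag T ω → HasVertDerivAt f t ω (fw t ω)) ∧
  ContOnLambda T fw

/-!
Put `η₀ = ω^t`; continuity of `∂_ω f` gives `∂_ω f(t,ω) = ∂_ω f(t,η₀)`. Replace the ramp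
`χ_{t,h}` by a staircase with `n` steps of width and height `h/n`. Each step is a horizontal
move on which `f` is differentiable in time, followed by a vertical jump on which `f` is
differentiable in the bump size; the mean value inequality bounds the increments, since both
derivatives stay `ε`-close to `∂_t f(t,η₀)` and `∂_ω f(t,η₀)` near `(t,η₀)` by continuity on `Λ`.
Summing, `f(t+h, staircase) = f(t,η₀) + h (∂_t f + ∂_ω f)(t,η₀) + O(ε h)` uniformly in `n`,
and continuity of `f` lets `n → ∞`. Subtracting `f(t+h,η₀) = f(t,η₀) + h ∂_t f(t,η₀) + o(h)`
leaves `D_ω f(t,ω) = ∂_ω f(t,η₀)`.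
-/

lemma hasDerivWithinAt_Ici_of_tendsto_slope_right {g : ℝ → ℝ} {x d : ℝ}
    (h : Tendsto (fun k => (g (x + k) - g x) / k) (𝓝[>] 0) (𝓝 d)) :
    HasDerivWithinAt g d (Ici x) x := by
  rw [← hasDerivWithinAt_Ioi_iff_Ici,
    hasDerivWithinAt_iff_tendsto_slope' (s := Ioi x) (lt_irrefl x)]
  have hmap : 𝓝[>] x = map (x + ·) (𝓝[>] 0) := by simp
  rw [hmap, tendsto_map'_iff]
  exact h.congr fun k => by simp [slope_def_field]

lemma hasDerivAt_of_tendsto_slope {g : ℝ → ℝ} {x d : ℝ}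
    (h : Tendsto (fun k => (g (x + k) - g x) / k) (𝓝[≠] 0) (𝓝 d)) : HasDerivAt g d x :=
  hasDerivAt_iff_tendsto_slope_zero.2 <| h.congr fun k => by rw [smul_eq_mul, div_eq_inv_mul]

lemma abs_sub_sub_mul_le_of_hasDerivWithinAt_Ici {g g' : ℝ → ℝ} {a b c ε : ℝ} (hab : a ≤ b)
    (hg : ContinuousOn g (Icc a b)) (hg' : ∀ x ∈ Ico a b, HasDerivWithinAt g (g' x) (Ici x) x)
    (hband : ∀ x ∈ Ico a b, |g' x - c| ≤ ε) :
    |g b - g a - (b - a) * c| ≤ ε * (b - a) := by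
  have := norm_image_sub_le_of_norm_deriv_right_le_segment (f := fun x => g x - x * c)
    (hg.sub (continuousOn_id.mul continuousOn_const))
    (fun x hx => (hg' x hx).sub ((hasDerivAt_mul_const c).hasDerivWithinAt)) hband b ⟨hab, le_rfl⟩
  rw [Real.norm_eq_abs] at this
  convert this using 2
  ring

lemma stopped_apply_min_of_le {ω : ℝ → ℝ} {t s : ℝ} (hts : t ≤ s) (σ : ℝ) :
    stopped ω t (min σ s) = stopped ω t σ := by
  simp only [stopped, min_assoc, min_eq_right hts]

lemma stopped_eq_self_of_le {η : ℝ → ℝ} {a s : ℝ} (h : stopped η a = η) (has : a ≤ s) :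
    stopped η s = η := by
  funext σ
  rw [stopped, ← h, stopped_apply_min_of_le has, h]

lemma stopped_stopped (ω : ℝ → ℝ) (t : ℝ) : stopped (stopped ω t) t = stopped ω t :=
  funext fun σ => by rw [stopped, stopped_apply_min_of_le le_rfl]

lemma bump_zero (η : ℝ → ℝ) (s : ℝ) : bump η s 0 = η := funext fun σ => by simp [bump]

lemma bump_bump (η : ℝ → ℝ) (s a b : ℝ) : bump (bump η s a) s b = bump η s (a + b) :=
  funext fun σ => by by_cases h : s ≤ σ <;> simp [bump, h]; ring

lemma abs_bump_sub_le (η : ℝ → ℝ) (s a σ : ℝ) : |bump η s a σ - η σ| ≤ |a| := by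
  by_cases h : s ≤ σ <;> simp [bump, h]

lemma chi_eq_min_max (t : ℝ) {h : ℝ} (hh : 0 ≤ h) :
    chi t h = fun σ => min (max (σ - t) 0) h := by
  funext σ
  simp only [chi]
  split_ifs
  · rw [max_eq_right (by linarith), min_eq_left hh]
  · rw [max_eq_left (by linarith), min_eq_left (by linarith)]
  · rw [max_eq_left (by linarith), min_eq_right (by linarith)]

lemma continuous_chi (t : ℝ) {h : ℝ} (hh : 0 ≤ h) : Continuous (chi t h) := by
  rw [chi_eq_min_max t hh]
  fun_prop

section Cadlag

variable {T : ℝ}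

lemma Cadlag.add {η g : ℝ → ℝ} (hη : Cadlag T η) (hg : Cadlag T g) :
    Cadlag T (fun σ => η σ + g σ) := by
  refine ⟨fun u hu => (hη.1 u hu).add (hg.1 u hu), fun u hu => ?_⟩
  obtain ⟨l, hl⟩ := hη.2 u hu
  obtain ⟨m, hm⟩ := hg.2 u hu
  exact ⟨l + m, hl.add hm⟩

lemma Continuous.cadlag {g : ℝ → ℝ} (hg : Continuous g) : Cadlag T g :=
  ⟨fun _ _ => hg.continuousWithinAt,
    fun u _ => ⟨g u, (hg.tendsto u).mono_left nhdsWithin_le_nhds⟩⟩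

lemma cadlag_step (s a : ℝ) : Cadlag T (fun σ => if s ≤ σ then a else 0) := by
  constructor
  · intro u _
    rcases le_or_gt s u with hsu | hus
    · exact continuousWithinAt_const.congr (fun σ hσ => if_pos (hsu.trans hσ)) (if_pos hsu)
    · refine continuousWithinAt_const.congr_of_eventuallyEq ?_ (if_neg hus.not_ge)
      filter_upwards [mem_nhdsWithin_of_mem_nhds (Iio_mem_nhds hus)] with σ hσ
      exact if_neg (not_le.2 hσ)
  · intro u _
    rcases lt_or_ge s u with hsu | hus
    · refine ⟨a, tendsto_const_nhds.congr' ?_⟩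
      filter_upwards [mem_nhdsWithin_of_mem_nhds (Ioi_mem_nhds hsu)] with σ hσ
      exact (if_pos (le_of_lt hσ)).symm
    · refine ⟨0, tendsto_const_nhds.congr' ?_⟩
      filter_upwards [self_mem_nhdsWithin] with σ hσ
      exact (if_neg (not_le.2 (lt_of_lt_of_le hσ hus))).symm

lemma Cadlag.bump {η : ℝ → ℝ} (hη : Cadlag T η) (s a : ℝ) : Cadlag T (bump η s a) :=
  hη.add (cadlag_step s a)

lemma Cadlag.stopped {ω : ℝ → ℝ} (hω : Cadlag T ω) (t : ℝ) : Cadlag T (stopped ω t) := by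
  constructor
  · intro u hu
    rcases lt_or_ge u t with hut | htu
    · have hmin : ContinuousWithinAt (fun s : ℝ => min s t) (Ici u) u :=
        (continuous_id.min continuous_const).continuousWithinAt
      refine ContinuousWithinAt.comp (g := ω) ?_ hmin fun s hs => le_min hs hut.le
      rw [min_eq_left hut.le]
      exact hω.1 u hu
    · refine (continuousWithinAt_const (b := ω t)).congr (fun s hs => ?_) ?_
      · simp [_root_.stopped, htu.trans hs]
      · simp [_root_.stopped, htu]
  · intro u hu
    rcases le_or_gt u t with hut | htu
    · obtain ⟨l, hl⟩ := hω.2 u hu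
      refine ⟨l, hl.congr' ?_⟩
      filter_upwards [self_mem_nhdsWithin] with s hs
      simp [_root_.stopped, min_eq_left (hs.le.trans hut)]
    · refine ⟨ω t, tendsto_const_nhds.congr' ?_⟩
      filter_upwards [mem_nhdsWithin_of_mem_nhds (Ioi_mem_nhds htu)] with s hs
      simp [_root_.stopped, min_eq_right (le_of_lt (mem_Ioi.1 hs))]

end Cadlag

lemma dInf_le_of_forall {T : ℝ} {p q : ℝ × (ℝ → ℝ)} {C : ℝ}
    (h : ∀ σ, |p.2 (min p.1 σ) - q.2 (min q.1 σ)| ≤ C) : dInf T p q ≤ |p.1 - q.1| + C :=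
  add_le_add le_rfl (Real.iSup_le (fun σ => h σ) ((abs_nonneg _).trans (h 0)))

lemma dInf_le_of_stopped_eq {T a s x : ℝ} {η : ℝ → ℝ} (h : stopped η a = η) (has : a ≤ s)
    (hax : a ≤ x) : dInf T (s, η) (x, η) ≤ |s - x| := by
  have key : ∀ y, a ≤ y → ∀ σ, η (min y σ) = stopped η a σ := fun y hy σ => by
    conv_lhs => rw [← h]
    rw [min_comm, stopped_apply_min_of_le hy]
  simpa using dInf_le_of_forall (T := T) (p := (s, η)) (q := (x, η)) (C := 0)
    fun σ => by simp [key s has, key x hax]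

lemma dInf_stopped_le {T t s C : ℝ} {ω η : ℝ → ℝ} (hts : t ≤ s)
    (h : ∀ σ, |η σ - stopped ω t σ| ≤ C) : dInf T (t, stopped ω t) (s, η) ≤ s - t + C := by
  have hpt : ∀ σ, |stopped ω t (min t σ) - η (min s σ)| ≤ C := fun σ => by
    rw [min_comm t σ, stopped_apply_min_of_le le_rfl, ← stopped_apply_min_of_le hts σ,
      abs_sub_comm, min_comm]
    exact h _
  have := dInf_le_of_forall (T := T) (p := (t, stopped ω t)) (q := (s, η)) hpt
  rwa [abs_sub_comm, abs_of_nonneg (sub_nonneg.2 hts)] at this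

namespace ContOnLambda

variable {T : ℝ} {g : ℝ → (ℝ → ℝ) → ℝ}

lemma apply_stopped (hg : ContOnLambda T g) {t : ℝ} (ht : t ∈ Icc 0 T) {ω : ℝ → ℝ}
    (hω : Cadlag T ω) : g t (stopped ω t) = g t ω := by
  refine eq_of_forall_dist_le fun ε hε => ?_
  obtain ⟨δ, hδ, H⟩ := hg t ht ω hω ε hε
  refine (H t ht _ (hω.stopped t) ((dInf_le_of_forall (C := 0) fun σ => ?_).trans_lt ?_)).le
  · simp [stopped]
  · simpa using hδ

lemma continuousOn_time (hg : ContOnLambda T g) {η : ℝ → ℝ} (hη : Cadlag T η) {a b : ℝ}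
    (hstop : stopped η a = η) (ha : 0 ≤ a) (hbT : b ≤ T) :
    ContinuousOn (fun s => g s η) (Icc a b) := by
  intro s hs
  rw [Metric.continuousWithinAt_iff]
  intro ε hε
  obtain ⟨δ, hδ, H⟩ := hg s ⟨ha.trans hs.1, hs.2.trans hbT⟩ η hη ε hε
  refine ⟨δ, hδ, fun x hx hxs => ?_⟩
  rw [Real.dist_eq] at hxs ⊢
  refine H x ⟨ha.trans hx.1, hx.2.trans hbT⟩ η hη ?_
  exact (dInf_le_of_stopped_eq hstop hs.1 hx.1).trans_lt (by rwa [abs_sub_comm])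

lemma tendsto_apply_of_uniform (hg : ContOnLambda T g) {s : ℝ} (hs : s ∈ Icc 0 T)
    {η : ℝ → ℝ} (hη : Cadlag T η) {ι : Type*} {l : Filter ι} {η' : ι → ℝ → ℝ} {C : ι → ℝ}
    (hC : Tendsto C l (𝓝 0)) (hclose : ∀ᶠ i in l, Cadlag T (η' i) ∧ ∀ σ, |η' i σ - η σ| ≤ C i) :
    Tendsto (fun i => g s (η' i)) l (𝓝 (g s η)) := by
  rw [Metric.tendsto_nhds]
  intro ε hε
  obtain ⟨δ, hδ, H⟩ := hg s hs η hη ε hε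
  filter_upwards [hclose, hC.eventually_lt_const hδ] with i ⟨hcad, hi⟩ hCi
  rw [Real.dist_eq]
  refine H s hs _ hcad ((dInf_le_of_forall fun σ => ?_).trans_lt (by simpa using hCi))
  rw [abs_sub_comm]
  exact hi _

lemma eventually_abs_sub_le (hg : ContOnLambda T g) {t : ℝ} (ht : t ∈ Ico 0 T) {ω : ℝ → ℝ}
    (hω : Cadlag T ω) {ε : ℝ} (hε : 0 < ε) :
    ∀ᶠ h in 𝓝[>] 0, ∀ s ∈ Icc t (t + h), ∀ η, Cadlag T η →
      (∀ σ, |η σ - stopped ω t σ| ≤ h) → |g s η - g t (stopped ω t)| ≤ ε := by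
  obtain ⟨δ, hδ, H⟩ := hg t (Ico_subset_Icc_self ht) _ (hω.stopped t) ε hε
  filter_upwards [Ioo_mem_nhdsGT (lt_min (half_pos hδ) (sub_pos.2 ht.2))]
    with h ⟨_, hh⟩ s hs η hη hclose
  have hhδ := hh.trans_le (min_le_left _ _)
  have hhT := hh.trans_le (min_le_right _ _)
  refine (H s ⟨ht.1.trans hs.1, by linarith [hs.2]⟩ η hη ?_).le
  calc dInf T (t, stopped ω t) (s, η) ≤ s - t + h := dInf_stopped_le hs.1 hclose
    _ < δ := by linarith [hs.2]

end ContOnLambda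

section Increments

variable {T : ℝ} {f ft fw : ℝ → (ℝ → ℝ) → ℝ}

lemma abs_horiz_increment_le (hfC : ContOnLambda T f)
    (hhd : ∀ s ∈ Ico (0:ℝ) T, ∀ η, Cadlag T η → HasHorizDerivAt f s η (ft s η))
    {η : ℝ → ℝ} (hη : Cadlag T η) {a b c ε : ℝ} (hstop : stopped η a = η) (ha : 0 ≤ a)
    (hab : a ≤ b) (hbT : b ≤ T) (hband : ∀ s ∈ Ico a b, |ft s η - c| ≤ ε) :
    |f b η - f a η - (b - a) * c| ≤ ε * (b - a) := by
  refine abs_sub_sub_mul_le_of_hasDerivWithinAt_Ici hab (hfC.continuousOn_time hη hstop ha hbT)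
    (fun s hs => hasDerivWithinAt_Ici_of_tendsto_slope_right ?_) hband
  have := hhd s ⟨ha.trans hs.1, hs.2.trans_le hbT⟩ η hη
  rwa [HasHorizDerivAt, stopped_eq_self_of_le hstop hs.1] at this

lemma abs_vert_increment_le
    (hvd : ∀ s ∈ Icc (0:ℝ) T, ∀ η, Cadlag T η → HasVertDerivAt f s η (fw s η))
    {η : ℝ → ℝ} (hη : Cadlag T η) {b k c ε : ℝ} (hb : b ∈ Icc 0 T) (hk : 0 ≤ k)
    (hband : ∀ x ∈ Ico 0 k, |fw b (bump η b x) - c| ≤ ε) :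
    |f b (bump η b k) - f b η - k * c| ≤ ε * k := by
  have hderiv : ∀ x, HasDerivAt (fun y => f b (bump η b y)) (fw b (bump η b x)) x := fun x => by
    have := hvd b hb _ (hη.bump b x)
    simp only [HasVertDerivAt, bump_bump] at this
    exact hasDerivAt_of_tendsto_slope this
  simpa only [bump_zero, sub_zero] using abs_sub_sub_mul_le_of_hasDerivWithinAt_Ici hk
    (fun x _ => (hderiv x).continuousAt.continuousWithinAt)
    (fun x _ => (hderiv x).hasDerivWithinAt) hband

end Increments

/-- `ω^t` followed by upward jumps of size `k` at the times `t + k, …, t + i k`: a staircase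
approximation of `ω^t + χ_{t,ik}`. -/
def staircase (ω : ℝ → ℝ) (t k : ℝ) (i : ℕ) : ℝ → ℝ :=
  fun σ => stopped ω t σ + k * (min i ⌊(σ - t) / k⌋₊ : ℕ)

section Staircase

variable {ω : ℝ → ℝ} {t k : ℝ}

@[simp] lemma staircase_zero : staircase ω t k 0 = stopped ω t := by
  funext σ
  simp [staircase]

lemma staircase_succ (hk : 0 < k) (i : ℕ) :
    staircase ω t k (i + 1) = bump (staircase ω t k i) (t + i * k + k) k := by
  funext σ
  simp only [staircase, bump]
  by_cases hσ : t + i * k + k ≤ σ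
  · have hi : i + 1 ≤ ⌊(σ - t) / k⌋₊ := (Nat.le_floor_iff' i.succ_ne_zero).2 <| by
      rw [le_div_iff₀ hk]; push_cast; linarith
    rw [if_pos hσ, min_eq_left hi, min_eq_left (Nat.le_of_succ_le hi)]
    push_cast
    ring
  · have hi : ⌊(σ - t) / k⌋₊ < i + 1 := (Nat.floor_lt' i.succ_ne_zero).2 <| by
      rw [div_lt_iff₀ hk]; push_cast; linarith
    rw [if_neg hσ, min_eq_right (Nat.le_of_lt_succ hi), min_eq_right hi.le, add_zero]

lemma stopped_staircase (hk : 0 < k) (i : ℕ) :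
    stopped (staircase ω t k i) (t + i * k) = staircase ω t k i := by
  funext σ
  rcases le_total σ (t + i * k) with hσ | hσ
  · rw [stopped, min_eq_left hσ]
  · have hi : i ≤ ⌊(σ - t) / k⌋₊ := Nat.le_floor <| by rw [le_div_iff₀ hk]; linarith
    have hik : 0 ≤ (i : ℝ) * k := by positivity
    simp only [stopped, staircase, min_eq_right hσ, add_sub_cancel_left,
      mul_div_cancel_right₀ _ hk.ne', Nat.floor_natCast, min_self, min_eq_left hi]
    rw [min_eq_right (by linarith : t ≤ t + i * k), min_eq_right (by linarith : t ≤ σ)]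

lemma cadlag_staircase {T : ℝ} (hω : Cadlag T ω) (hk : 0 < k) :
    ∀ i, Cadlag T (staircase ω t k i)
  | 0 => by simpa using hω.stopped t
  | i + 1 => by simpa only [staircase_succ hk] using (cadlag_staircase hω hk i).bump _ _

lemma abs_staircase_sub_stopped_le (hk : 0 ≤ k) (i : ℕ) (σ : ℝ) :
    |staircase ω t k i σ - stopped ω t σ| ≤ i * k := by
  rw [staircase, add_sub_cancel_left, abs_of_nonneg (by positivity), mul_comm]
  gcongr
  exact_mod_cast min_le_left _ _

lemma abs_staircase_sub_chi_le (hk : 0 < k) (n : ℕ) (σ : ℝ) :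
    |staircase ω t k n σ - (stopped ω t σ + chi t (n * k) σ)| ≤ k := by
  rw [chi_eq_min_max t (by positivity), staircase, add_sub_add_left_eq_sub]
  set y := max (σ - t) 0 with hy_def
  have hfloor : ⌊(σ - t) / k⌋₊ = ⌊y / k⌋₊ := by
    rcases le_total (σ - t) 0 with h | h
    · rw [hy_def, max_eq_right h, zero_div, Nat.floor_zero,
        Nat.floor_eq_zero.2 ((div_nonpos_of_nonpos_of_nonneg h hk.le).trans_lt one_pos)]
    · rw [hy_def, max_eq_left h]
  have hy : 0 ≤ y / k := div_nonneg (le_max_right _ _) hk.le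
  have hlow : k * ⌊y / k⌋₊ ≤ y := by
    have := Nat.floor_le hy
    rwa [le_div_iff₀ hk, mul_comm] at this
  have hup : y < k * ⌊y / k⌋₊ + k := by
    have := Nat.lt_floor_add_one (y / k)
    rwa [div_lt_iff₀ hk, add_mul, one_mul, mul_comm] at this
  have hmin : k * ((min n ⌊y / k⌋₊ : ℕ) : ℝ) = min (k * ⌊y / k⌋₊) (n * k) := by
    rw [Nat.cast_min, mul_min_of_nonneg _ _ hk.le, min_comm, mul_comm k (n : ℝ)]
  rw [hfloor, hmin]
  refine (abs_min_sub_min_le_max _ _ _ _).trans ?_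
  rw [sub_self, abs_zero, max_eq_left (abs_nonneg _), abs_le]
  constructor <;> linarith

end Staircase

lemma abs_apply_staircase_sub_le {T : ℝ} {f ft fw : ℝ → (ℝ → ℝ) → ℝ} (hfC : ContOnLambda T f)
    (hhd : ∀ s ∈ Ico (0:ℝ) T, ∀ η, Cadlag T η → HasHorizDerivAt f s η (ft s η))
    (hvd : ∀ s ∈ Icc (0:ℝ) T, ∀ η, Cadlag T η → HasVertDerivAt f s η (fw s η))
    {ω : ℝ → ℝ} (hω : Cadlag T ω) {t h k c c' ε : ℝ} (ht : 0 ≤ t) (hthT : t + h ≤ T)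
    (hk : 0 < k)
    (hft : ∀ s ∈ Icc t (t + h), ∀ η, Cadlag T η →
      (∀ σ, |η σ - stopped ω t σ| ≤ h) → |ft s η - c| ≤ ε)
    (hfw : ∀ s ∈ Icc t (t + h), ∀ η, Cadlag T η →
      (∀ σ, |η σ - stopped ω t σ| ≤ h) → |fw s η - c'| ≤ ε)
    (i : ℕ) (hi : i * k ≤ h) :
    |f (t + i * k) (staircase ω t k i) - f t (stopped ω t) - i * k * (c + c')|
      ≤ 2 * ε * (i * k) := by
  induction i with
  | zero => simp
  | succ i ih =>
    push_cast at hi ⊢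
    set a := t + i * k with ha
    set β := staircase ω t k i
    have hβ : Cadlag T β := cadlag_staircase hω hk i
    have hdist : ∀ σ, |β σ - stopped ω t σ| ≤ i * k := abs_staircase_sub_stopped_le hk.le i
    have hta : t ≤ a := le_add_of_nonneg_right (by positivity)
    have hH := abs_horiz_increment_le hfC hhd hβ (stopped_staircase hk i) (ht.trans hta)
      (le_add_of_nonneg_right hk.le) (by linarith)
      fun s hs => hft s ⟨hta.trans hs.1, by linarith [hs.2]⟩ β hβ fun σ =>
        (hdist σ).trans (by linarith)
    have hV := abs_vert_increment_le hvd hβ ⟨by linarith, by linarith⟩ hk.le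
      fun x hx => hfw (a + k) ⟨by linarith, by linarith⟩ _ (hβ.bump _ _) fun σ =>
        calc |bump β (a + k) x σ - stopped ω t σ|
            ≤ |bump β (a + k) x σ - β σ| + |β σ - stopped ω t σ| := abs_sub_le _ _ _
          _ ≤ |x| + i * k := add_le_add (abs_bump_sub_le _ _ _ _) (hdist σ)
          _ ≤ h := by rw [abs_of_nonneg hx.1]; linarith [hx.2]
    rw [← staircase_succ hk] at hV
    rw [add_sub_cancel_left] at hH
    have hIH := ih (by linarith)
    calc |f (t + (i + 1) * k) (staircase ω t k (i + 1)) - f t (stopped ω t)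
          - (i + 1) * k * (c + c')|
        = |(f (a + k) (staircase ω t k (i + 1)) - f (a + k) β - k * c')
            + (f (a + k) β - f a β - k * c)
            + (f a β - f t (stopped ω t) - i * k * (c + c'))| := by
          rw [show t + (i + 1) * k = a + k by rw [ha]; ring]
          ring_nf
      _ ≤ ε * k + ε * k + 2 * ε * (i * k) :=
          (abs_add_three _ _ _).trans (add_le_add (add_le_add hV hH) hIH)
      _ = 2 * ε * ((i + 1) * k) := by ring

lemma tendsto_slope_apply_chi_path {T : ℝ} {f ft fw : ℝ → (ℝ → ℝ) → ℝ}
    (hfC : ContOnLambda T f)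
    (hhd : ∀ s ∈ Ico (0:ℝ) T, ∀ η, Cadlag T η → HasHorizDerivAt f s η (ft s η))
    (hvd : ∀ s ∈ Icc (0:ℝ) T, ∀ η, Cadlag T η → HasVertDerivAt f s η (fw s η))
    (hftC : ContOnLambda T ft) (hfwC : ContOnLambda T fw) {t : ℝ} (ht : t ∈ Ico 0 T)
    {ω : ℝ → ℝ} (hω : Cadlag T ω) :
    Tendsto (fun h => (f (t + h) (fun s => stopped ω t s + chi t h s) - f t (stopped ω t)) / h)
      (𝓝[>] 0) (𝓝 (ft t (stopped ω t) + fw t (stopped ω t))) := by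
  rw [Metric.tendsto_nhds]
  intro ε hε
  filter_upwards [hftC.eventually_abs_sub_le ht hω (by positivity : 0 < ε / 4),
    hfwC.eventually_abs_sub_le ht hω (by positivity : 0 < ε / 4),
    Ioo_mem_nhdsGT (sub_pos.2 ht.2)] with h hft hfw ⟨hh0, hhT⟩
  have hthT : t + h ≤ T := by linarith
  have hmesh : ∀ n : ℕ, n ≠ 0 → 0 < h / n ∧ (n : ℝ) * (h / n) = h := fun n hn =>
    ⟨by positivity, mul_div_cancel₀ _ (Nat.cast_ne_zero.2 hn)⟩
  have hstair : ∀ n : ℕ, n ≠ 0 → |f (t + h) (staircase ω t (h / n) n) - f t (stopped ω t)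
      - h * (ft t (stopped ω t) + fw t (stopped ω t))| ≤ ε / 2 * h := fun n hn => by
    obtain ⟨hk, hnk⟩ := hmesh n hn
    have := abs_apply_staircase_sub_le hfC hhd hvd hω ht.1 hthT hk hft hfw n hnk.le
    rw [hnk] at this
    linarith
  have hlim : Tendsto (fun n : ℕ => f (t + h) (staircase ω t (h / n) n)) atTop
      (𝓝 (f (t + h) (fun s => stopped ω t s + chi t h s))) :=
    hfC.tendsto_apply_of_uniform ⟨by linarith [ht.1], hthT⟩
      ((hω.stopped t).add ((continuous_chi t hh0.le).cadlag))
      (tendsto_const_div_atTop_nhds_zero_nat h) <|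
      (eventually_ne_atTop 0).mono fun n hn => by
        obtain ⟨hk, hnk⟩ := hmesh n hn
        exact ⟨cadlag_staircase hω hk n, fun σ => by
          simpa only [hnk] using abs_staircase_sub_chi_le hk n σ⟩
  have hbound := le_of_tendsto ((hlim.sub_const _).sub_const _).abs
    ((eventually_ne_atTop 0).mono hstair)
  have hquot : (f (t + h) (fun s => stopped ω t s + chi t h s) - f t (stopped ω t)) / h
      - (ft t (stopped ω t) + fw t (stopped ω t))
      = (f (t + h) (fun s => stopped ω t s + chi t h s) - f t (stopped ω t)
        - h * (ft t (stopped ω t) + fw t (stopped ω t))) / h := by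
    field_simp
  rw [Real.dist_eq, hquot, abs_div, abs_of_pos hh0, div_lt_iff₀ hh0]
  linarith [mul_pos hε hh0]

theorem stmt4_general (T : ℝ) (f ft fw : ℝ → (ℝ → ℝ) → ℝ)
    (hf : C11 T f ft fw) (hftC : ContOnLambda T ft) :
    ∀ t ∈ Set.Ico (0:ℝ) T, ∀ ω : ℝ → ℝ, Cadlag T ω → HasDVertDerivAt f t ω (fw t ω) := by
  obtain ⟨hfC, hhd, -, hvd, hfwC⟩ := hf
  intro t ht ω hω
  have hF := tendsto_slope_apply_chi_path hfC hhd hvd hftC hfwC ht hω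
  have hG : Tendsto (fun h => (f (t + h) (stopped ω t) - f t (stopped ω t)) / h) (𝓝[>] 0)
      (𝓝 (ft t (stopped ω t))) := by
    simpa only [HasHorizDerivAt, stopped_stopped] using hhd t ht _ (hω.stopped t)
  rw [HasDVertDerivAt, ← hfwC.apply_stopped (Ico_subset_Icc_self ht) hω]
  convert hF.sub hG using 2 <;> ring

/-- Corollary 1: if `f ∈ C^{1,1}([0,T]×D([0,T],ℝ))` with
`∂_t f, ∂_ω f ∈ C(Λ)`, then for every `(t,ω) ∈ [0,T)×D([0,T],ℝ)` the modified vertical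
derivative `D_ω f(t,ω)` exists and `∂_ω f(t,ω) = D_ω f(t,ω)`. -/
theorem stmt4 (T : ℝ) (hT : 0 < T) (f ft fw : ℝ → (ℝ → ℝ) → ℝ)
    (hf : C11 T f ft fw) (hftC : ContOnLambda T ft) (hfwC : ContOnLambda T fw) :
    ∀ t ∈ Set.Ico (0:ℝ) T, ∀ ω : ℝ → ℝ, Cadlag T ω → HasDVertDerivAt f t ω (fw t ω) :=
  stmt4_general T f ft fw hf hftC
end
end

section
/- (Lemma A1) Let f ∈ C(Λ), let X ∈ D([0,T],ℝ) and let (X_n)_{n≥1} be a sequence in D([0,T],ℝ) with ‖X_n − X‖_T → 0 as n → ∞. Then sup_{t∈[0,T]} |f(t,X_n) − f(t,X)| → 0 as n → ∞. -/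
open Filter Set MeasureTheory Topology

noncomputable section

/-! On the compact interval `[0,T]` uniform convergence follows from locally uniform convergence,
so fix `τ ∈ [0,T]` and approach it from each side. As `t ↓ τ`, right-continuity gives
`(t, X) → (τ, X)` in `d_∞`; as `t ↑ τ`, the existence of `X(τ−)` gives `(t, X) → (τ, Y)`, where
`Y` is `X` on `[0,τ)` frozen at `X(τ−)`. If `d_∞((τ,Z),(t,X)) < δ/3`, `|t − τ| < δ/3` and
`‖ω − X‖_T < δ/3`, then `(t, X)` and `(t, ω)` both lie `δ`-close to `(τ, Z)`, so continuity of `f`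
at `(τ, Z)` bounds `|f(t,ω) − f(t,X)|` uniformly for `t` near `τ` on that side. -/

lemma TendstoUniformlyOnFilter.sup_right {ι α β : Type*} [UniformSpace β] {F : ι → α → β}
    {f : α → β} {p : Filter ι} {p₁ p₂ : Filter α} (h₁ : TendstoUniformlyOnFilter F f p p₁)
    (h₂ : TendstoUniformlyOnFilter F f p p₂) : TendstoUniformlyOnFilter F f p (p₁ ⊔ p₂) := by
  rw [tendstoUniformlyOnFilter_iff_tendsto] at *
  rw [prod_sup]
  exact h₁.sup h₂

section Order

variable {α : Type*} [LinearOrder α] [TopologicalSpace α] [OrderTopology α] {a : α} {P : α → Prop}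

lemma eventually_nhdsLT_forall_Ico [NoMinOrder α] (h : ∀ᶠ u in 𝓝[<] a, P u) :
    ∀ᶠ t in 𝓝[<] a, ∀ u ∈ Ico t a, P u := by
  obtain ⟨b, hb, hsub⟩ := mem_nhdsLT_iff_exists_Ioo_subset.mp h
  filter_upwards [Ioo_mem_nhdsLT hb] with t ht u hu
  exact hsub ⟨ht.1.trans_le hu.1, hu.2⟩

lemma eventually_nhdsGE_forall_Icc [NoMaxOrder α] (h : ∀ᶠ u in 𝓝[≥] a, P u) :
    ∀ᶠ t in 𝓝[≥] a, ∀ u ∈ Icc a t, P u := by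
  obtain ⟨b, hb, hsub⟩ := mem_nhdsGE_iff_exists_Ico_subset.mp h
  filter_upwards [Ico_mem_nhdsGE hb] with t ht u hu
  exact hsub ⟨hu.1, hu.2.trans_lt ht.2⟩

end Order

def stopBefore (X : ℝ → ℝ) (τ l : ℝ) : ℝ → ℝ := fun s => if s < τ then X s else l

lemma abs_sub_min_le_of_forall_Icc {X : ℝ → ℝ} {τ t ρ : ℝ} (hτt : τ ≤ t) (hρ : 0 ≤ ρ)
    (h : ∀ u ∈ Icc τ t, |X u - X τ| ≤ ρ) (s : ℝ) : |X (min τ s) - X (min t s)| ≤ ρ := by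
  rcases le_total s τ with hs | hs
  · rw [min_eq_right hs, min_eq_right (hs.trans hτt), sub_self, abs_zero]
    exact hρ
  · rw [min_eq_left hs, abs_sub_comm]
    exact h _ ⟨le_min hτt hs, min_le_left _ _⟩

lemma abs_stopBefore_min_sub_le_of_forall_Ico {X : ℝ → ℝ} {τ t l ρ : ℝ} (htτ : t < τ)
    (h : ∀ u ∈ Ico t τ, |X u - l| ≤ ρ) (s : ℝ) :
    |stopBefore X τ l (min τ s) - X (min t s)| ≤ 2 * ρ := by
  have hXt := h t ⟨le_rfl, htτ⟩
  have hρ : 0 ≤ ρ := (abs_nonneg _).trans hXt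
  rcases le_or_gt s t with hst | hts
  · rw [min_eq_right (hst.trans htτ.le), min_eq_right hst, stopBefore, if_pos (hst.trans_lt htτ),
      sub_self, abs_zero]
    positivity
  rw [min_eq_left hts.le]
  rcases lt_or_ge s τ with hsτ | hτs
  · rw [min_eq_right hsτ.le, stopBefore, if_pos hsτ]
    calc |X s - X t| ≤ |X s - l| + |l - X t| := abs_sub_le _ _ _
      _ ≤ 2 * ρ := by rw [abs_sub_comm l]; linarith [h s ⟨hts.le, hsτ⟩]
  · rw [min_eq_left hτs, stopBefore, if_neg (lt_irrefl τ), abs_sub_comm]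
    linarith

section Paths

variable {T : ℝ} {X : ℝ → ℝ}

lemma cadlag_stopBefore (hX : Cadlag T X) (τ l : ℝ) : Cadlag T (stopBefore X τ l) := by
  constructor
  · intro t ht
    rcases lt_or_ge t τ with htτ | hτt
    · have hev : stopBefore X τ l =ᶠ[𝓝[≥] t] X := by
        filter_upwards [nhdsWithin_le_nhds (Iio_mem_nhds htτ)] with s hs
        exact if_pos hs
      exact (hX.1 t ht).congr_of_eventuallyEq hev (if_pos htτ)
    · have hev : stopBefore X τ l =ᶠ[𝓝[≥] t] fun _ => l := by
        filter_upwards [self_mem_nhdsWithin] with s hs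
        exact if_neg (not_lt.mpr (hτt.trans hs))
      exact continuousWithinAt_const.congr_of_eventuallyEq hev (if_neg (not_lt.mpr hτt))
  · intro t ht
    rcases le_or_gt t τ with htτ | hτt
    · obtain ⟨m, hm⟩ := hX.2 t ht
      refine ⟨m, hm.congr' ?_⟩
      filter_upwards [self_mem_nhdsWithin] with s hs
      exact (if_pos (lt_of_lt_of_le hs htτ)).symm
    · refine ⟨l, tendsto_const_nhds.congr' ?_⟩
      filter_upwards [nhdsWithin_le_nhds (Ioi_mem_nhds hτt)] with s hs
      exact (if_neg (not_lt.mpr (le_of_lt hs))).symm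

lemma Cadlag.eventually_abs_sub_min_le_right (hX : Cadlag T X) {τ : ℝ} (hτ : τ ∈ Icc 0 T)
    {ρ : ℝ} (hρ : 0 < ρ) : ∀ᶠ t in 𝓝[Icc τ T] τ, ∀ s, |X (min τ s) - X (min t s)| ≤ ρ := by
  rcases hτ.2.lt_or_eq with hτT | rfl
  · have hXτ : ∀ᶠ u in 𝓝[≥] τ, |X u - X τ| ≤ ρ :=
      hX.1 τ ⟨hτ.1, hτT⟩ (Metric.closedBall_mem_nhds _ hρ)
    filter_upwards [nhdsWithin_mono _ Icc_subset_Ici_self (eventually_nhdsGE_forall_Icc hXτ),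
      self_mem_nhdsWithin] with t ht htmem
    exact abs_sub_min_le_of_forall_Icc htmem.1 hρ.le ht
  · filter_upwards [self_mem_nhdsWithin] with t ht
    rw [Icc_self, mem_singleton_iff] at ht
    intro s
    rw [ht, sub_self, abs_zero]
    exact hρ.le

lemma Cadlag.exists_eventually_abs_sub_min_le_left (hX : Cadlag T X) {τ : ℝ}
    (hτ : τ ∈ Icc 0 T) : ∃ Z, Cadlag T Z ∧
      ∀ ρ > 0, ∀ᶠ t in 𝓝[Ico 0 τ] τ, ∀ s, |Z (min τ s) - X (min t s)| ≤ ρ := by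
  rcases hτ.1.eq_or_lt with rfl | hτ0
  · exact ⟨X, hX, fun ρ _ => by simp⟩
  obtain ⟨l, hl⟩ := hX.2 τ ⟨hτ0, hτ.2⟩
  refine ⟨stopBefore X τ l, cadlag_stopBefore hX τ l, fun ρ hρ => ?_⟩
  have hXl : ∀ᶠ u in 𝓝[<] τ, |X u - l| ≤ ρ / 2 :=
    hl (Metric.closedBall_mem_nhds _ (half_pos hρ))
  filter_upwards [nhdsWithin_mono _ Ico_subset_Iio_self (eventually_nhdsLT_forall_Ico hXl),
    self_mem_nhdsWithin] with t ht htmem s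
  linarith [abs_stopBefore_min_sub_le_of_forall_Ico htmem.2 ht s]

lemma dInf_le (hT : 0 ≤ T) {t t' C : ℝ} {ω ω' : ℝ → ℝ}
    (h : ∀ s ∈ Icc 0 T, |ω (min t s) - ω' (min t' s)| ≤ C) :
    dInf T (t, ω) (t', ω') ≤ |t - t'| + C := by
  have : Nonempty (Icc (0 : ℝ) T) := ⟨⟨0, le_rfl, hT⟩⟩
  exact add_le_add le_rfl (ciSup_le fun s : Icc (0 : ℝ) T => h s.1 s.2)

lemma ContOnLambda.tendstoUniformlyOnFilter {f : ℝ → (ℝ → ℝ) → ℝ} (hf : ContOnLambda T f)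
    (hX : Cadlag T X) {Z : ℝ → ℝ} (hZ : Cadlag T Z) {τ : ℝ} (hτ : τ ∈ Icc 0 T) {S : Set ℝ}
    (hS : S ⊆ Icc 0 T) (hZX : ∀ ρ > 0, ∀ᶠ t in 𝓝[S] τ, ∀ s, |Z (min τ s) - X (min t s)| ≤ ρ)
    {ι : Type*} {p : Filter ι} {Xn : ι → ℝ → ℝ} (hXn : ∀ n, Cadlag T (Xn n))
    (hconv : TendstoUniformlyOn Xn X p (Icc 0 T)) :
    TendstoUniformlyOnFilter (fun n t => f t (Xn n)) (fun t => f t X) p (𝓝[S] τ) := by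
  rw [Metric.tendstoUniformlyOnFilter_iff]
  intro ε hε
  obtain ⟨δ, hδ, hfδ⟩ := hf τ hτ Z hZ (ε / 2) (half_pos hε)
  have hnear : ∀ᶠ t in 𝓝[S] τ, (t ∈ S ∧ |τ - t| < δ / 3) ∧
      ∀ s, |Z (min τ s) - X (min t s)| ≤ δ / 3 := by
    refine Eventually.and (Eventually.and self_mem_nhdsWithin ?_) (hZX _ (by positivity))
    filter_upwards [nhdsWithin_le_nhds (Metric.ball_mem_nhds τ (by positivity : 0 < δ / 3))]
      with t ht
    rwa [Metric.mem_ball, Real.dist_eq, abs_sub_comm] at ht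
  filter_upwards [(Metric.tendstoUniformlyOn_iff.mp hconv _ (by positivity : 0 < δ / 3)).prod_mk
    hnear] with ⟨n, t⟩ ⟨hn, ⟨htS, htτ⟩, hZXt⟩
  have ht := hS htS
  have hX' : dInf T (τ, Z) (t, X) < δ := by
    linarith [dInf_le (hτ.1.trans hτ.2) fun s _ => hZXt s]
  have hXn' : dInf T (τ, Z) (t, Xn n) < δ := by
    refine (dInf_le (hτ.1.trans hτ.2) fun s hs => ?_).trans_lt
      (by linarith : |τ - t| + 2 * (δ / 3) < δ)
    have hn' := hn (min t s) ⟨le_min ht.1 hs.1, (min_le_right _ _).trans hs.2⟩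
    rw [Real.dist_eq] at hn'
    calc |Z (min τ s) - Xn n (min t s)|
        ≤ |Z (min τ s) - X (min t s)| + |X (min t s) - Xn n (min t s)| := abs_sub_le _ _ _
      _ ≤ 2 * (δ / 3) := by linarith [hZXt s]
  have h₁ := hfδ t ht X hX hX'
  have h₂ := hfδ t ht (Xn n) (hXn n) hXn'
  rw [Real.dist_eq, abs_sub_comm]
  linarith [abs_sub_le (f t (Xn n)) (f τ Z) (f t X), abs_sub_comm (f τ Z) (f t X)]

end Paths

theorem stmt14_general (T : ℝ) (f : ℝ → (ℝ → ℝ) → ℝ) (hf : ContOnLambda T f)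
    (X : ℝ → ℝ) (hX : Cadlag T X) (Xn : ℕ → ℝ → ℝ) (hXn : ∀ n, Cadlag T (Xn n))
    (hconv : TendstoUniformlyOn Xn X Filter.atTop (Set.Icc 0 T)) :
    TendstoUniformlyOn (fun n t => f t (Xn n)) (fun t => f t X)
      Filter.atTop (Set.Icc 0 T) := by
  refine (tendstoLocallyUniformlyOn_iff_tendstoUniformlyOn_of_compact isCompact_Icc).mp ?_
  refine tendstoLocallyUniformlyOn_iff_filter.mpr fun τ hτ => ?_
  obtain ⟨Z, hZ, hZX⟩ := hX.exists_eventually_abs_sub_min_le_left hτ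
  rw [← Ico_union_Icc_eq_Icc hτ.1 hτ.2, nhdsWithin_union]
  have hleft := hf.tendstoUniformlyOnFilter hX hZ hτ
    (Ico_subset_Icc_self.trans (Icc_subset_Icc_right hτ.2)) hZX hXn hconv
  have hright := hf.tendstoUniformlyOnFilter hX hX hτ (Icc_subset_Icc_left hτ.1)
    (fun _ hρ => hX.eventually_abs_sub_min_le_right hτ hρ) hXn hconv
  exact hleft.sup_right hright

/-- Lemma A1: let `f ∈ C(Λ)`, let `X ∈ D([0,T],ℝ)` and `(X_n)` a
sequence of càdlàg paths with `‖X_n − X‖_T → 0`. Then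
`sup_{t∈[0,T]} |f(t,X_n) − f(t,X)| → 0`. -/
theorem stmt14 (T : ℝ) (hT : 0 < T) (f : ℝ → (ℝ → ℝ) → ℝ) (hf : ContOnLambda T f)
    (X : ℝ → ℝ) (hX : Cadlag T X) (Xn : ℕ → ℝ → ℝ) (hXn : ∀ n, Cadlag T (Xn n))
    (hconv : TendstoUniformlyOn Xn X Filter.atTop (Set.Icc 0 T)) :
    TendstoUniformlyOn (fun n t => f t (Xn n)) (fun t => f t X)
      Filter.atTop (Set.Icc 0 T) :=
  stmt14_general T f hf X hX Xn hXn hconv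
end
end
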